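/- arXiv:1909.11789 — 3 statements merged into one kernel-verified Lean document; each statement's English description precedes it below -/
import Mathlib

section
/- For every real z > 4, (1/(√2 π)) ∫_{-π}^{π} dq/((1 - cos q)² - z) = - (√(√(z-4) + √z)) / (z^{3/4} √(z-4)). -/
/-! Factor `𝔢 q - s² = (1 - s - cos q) (1 + s - cos q)` with `s = √z` and split into partial
fractions. For `|b| > 1`, `1 / (b - cos q)` is a constant multiple of the Poisson kernel
`(1 - ρ²) / (1 - 2ρ cos q + ρ²)` with `|ρ| < 1`, whose integral over a period is `2π`. The closed
form then comes from the denesting `√(√(s² - 4) + s) = (√(s - 2) + √(s + 2)) / √2`. -/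

open Real

noncomputable def 𝔢 (q : ℝ) : ℝ := (1 - Real.cos q) ^ 2

lemma one_sub_two_mul_cos_add_sq_eq (ρ x : ℝ) :
    1 - 2 * ρ * cos x + ρ ^ 2 = (1 - ρ * cos x) ^ 2 + (ρ * sin x) ^ 2 := by
  linear_combination -ρ ^ 2 * sin_sq_add_cos_sq x

section PoissonKernel

variable {ρ : ℝ}

lemma one_sub_mul_cos_pos (hρ : |ρ| < 1) (x : ℝ) : 0 < 1 - ρ * cos x := by
  have : |ρ * cos x| < 1 := by
    rw [abs_mul]; exact (mul_le_of_le_one_right (abs_nonneg ρ) (abs_cos_le_one x)).trans_lt hρ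
  linarith [(abs_lt.mp this).2]

lemma one_sub_two_mul_cos_add_sq_pos (hρ : |ρ| < 1) (x : ℝ) : 0 < 1 - 2 * ρ * cos x + ρ ^ 2 := by
  rw [one_sub_two_mul_cos_add_sq_eq]
  have := one_sub_mul_cos_pos hρ x
  positivity

/-- Unlike the `tan (x / 2)` substitution, this antiderivative is smooth on all of `ℝ`. -/
lemma hasDerivAt_poisson_antideriv (hρ : |ρ| < 1) (x : ℝ) :
    HasDerivAt (fun x => x + 2 * arctan (ρ * sin x / (1 - ρ * cos x)))
      ((1 - ρ ^ 2) / (1 - 2 * ρ * cos x + ρ ^ 2)) x := by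
  have hD := (one_sub_mul_cos_pos hρ x).ne'
  have hquot := ((hasDerivAt_sin x).const_mul ρ).fun_div
    ((hasDerivAt_const x 1).fun_sub ((hasDerivAt_cos x).const_mul ρ)) hD
  refine ((hasDerivAt_id' x).fun_add (hquot.arctan.const_mul 2)).congr_deriv ?_
  rw [one_sub_two_mul_cos_add_sq_eq]
  field_simp
  linear_combination -ρ ^ 2 * sin_sq_add_cos_sq x

theorem integral_poisson_kernel (hρ : |ρ| < 1) :
    ∫ q in (-π)..π, (1 - ρ ^ 2) / (1 - 2 * ρ * cos q + ρ ^ 2) = 2 * π := by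
  have hcont : Continuous fun q => (1 - ρ ^ 2) / (1 - 2 * ρ * cos q + ρ ^ 2) :=
    continuous_const.div (by fun_prop) fun q => (one_sub_two_mul_cos_add_sq_pos hρ q).ne'
  rw [intervalIntegral.integral_eq_sub_of_hasDerivAt
    (fun x _ => hasDerivAt_poisson_antideriv hρ x) (hcont.intervalIntegrable _ _)]
  simp only [sin_pi, sin_neg, mul_zero, neg_zero, zero_div, arctan_zero]
  ring

end PoissonKernel

theorem integral_one_div_sub_cos {b r : ℝ} (hr : r ^ 2 = b ^ 2 - 1) (hbr : |b - r| < 1) :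
    ∫ q in (-π)..π, 1 / (b - cos q) = 2 * π / r := by
  -- `ρ` is the root of `ρ² - 2bρ + 1` inside the unit interval
  set ρ := b - r
  have hnum : 1 - ρ ^ 2 = 2 * ρ * r := by linear_combination hr
  have hden (q : ℝ) : 1 - 2 * ρ * cos q + ρ ^ 2 = 2 * ρ * (b - cos q) := by linear_combination hr
  have hρ : ρ ≠ 0 := by
    rintro h
    simp [h] at hnum
  have hr0 : r ≠ 0 := by
    rintro rfl
    nlinarith [sq_lt_one_iff_abs_lt_one ρ |>.mpr hbr]
  have hkernel (q : ℝ) :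
      1 / (b - cos q) = r⁻¹ * ((1 - ρ ^ 2) / (1 - 2 * ρ * cos q + ρ ^ 2)) := by
    rw [hnum, hden, mul_div_mul_left _ _ (mul_ne_zero two_ne_zero hρ), ← mul_div_assoc,
      inv_mul_cancel₀ hr0]
  simp_rw [hkernel]
  rw [intervalIntegral.integral_const_mul, integral_poisson_kernel hbr, inv_mul_eq_div]

lemma abs_sub_sqrt_sq_sub_one_lt_one {b : ℝ} (hb : 1 < b) : |b - √(b ^ 2 - 1)| < 1 := by
  rw [abs_lt]
  constructor
  · have : √(b ^ 2 - 1) < b + 1 := (sqrt_lt' (by linarith)).mpr (by nlinarith)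
    linarith
  · have : b - 1 < √(b ^ 2 - 1) := (lt_sqrt (by linarith)).mpr (by nlinarith)
    linarith

theorem integral_one_div_sub_cos_of_one_lt {b : ℝ} (hb : 1 < b) :
    ∫ q in (-π)..π, 1 / (b - cos q) = 2 * π / √(b ^ 2 - 1) :=
  integral_one_div_sub_cos (sq_sqrt (by nlinarith)) (abs_sub_sqrt_sq_sub_one_lt_one hb)

theorem integral_one_div_sub_cos_of_lt_neg_one {b : ℝ} (hb : b < -1) :
    ∫ q in (-π)..π, 1 / (b - cos q) = -(2 * π / √(b ^ 2 - 1)) := by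
  have hsym := abs_sub_sqrt_sq_sub_one_lt_one (by linarith : 1 < -b)
  rw [neg_sq, ← abs_neg] at hsym
  rw [← div_neg]
  exact integral_one_div_sub_cos (by rw [neg_sq, sq_sqrt (by nlinarith)])
    (by convert hsym using 2; ring)

lemma one_div_𝔢_sub_sq {s : ℝ} (hs : 2 < s) (q : ℝ) :
    1 / (𝔢 q - s ^ 2) = 1 / (2 * s) * (1 / ((1 - s) - cos q) - 1 / ((1 + s) - cos q)) := by
  have h₁ : (1 - s) - cos q ≠ 0 := by linarith [neg_one_le_cos q]
  have h₂ : (1 + s) - cos q ≠ 0 := by linarith [cos_le_one q]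
  rw [𝔢, show (1 - cos q) ^ 2 - s ^ 2 = ((1 - s) - cos q) * ((1 + s) - cos q) by ring]
  field_simp
  ring

theorem integral_one_div_𝔢_sub_sq {s : ℝ} (hs : 2 < s) :
    ∫ q in (-π)..π, 1 / (𝔢 q - s ^ 2) =
      -(π / s) * (1 / √(s ^ 2 - 2 * s) + 1 / √(s ^ 2 + 2 * s)) := by
  have hint (c : ℝ) (hc : ∀ q, c - cos q ≠ 0) :
      IntervalIntegrable (fun q => 1 / (c - cos q)) MeasureTheory.volume (-π) π :=
    (continuous_const.div (by fun_prop) hc).intervalIntegrable _ _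
  simp_rw [one_div_𝔢_sub_sq hs]
  rw [intervalIntegral.integral_const_mul,
    intervalIntegral.integral_sub (hint _ fun q => by linarith [neg_one_le_cos q])
      (hint _ fun q => by linarith [cos_le_one q]),
    integral_one_div_sub_cos_of_lt_neg_one (by linarith),
    integral_one_div_sub_cos_of_one_lt (by linarith),
    show (1 - s) ^ 2 - 1 = s ^ 2 - 2 * s by ring, show (1 + s) ^ 2 - 1 = s ^ 2 + 2 * s by ring]
  have : s ≠ 0 := by positivity
  field_simp
  ring

lemma sqrt_sqrt_sq_sub_four_add {s : ℝ} (hs : 2 ≤ s) :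
    √(√(s ^ 2 - 4) + s) = (√(s - 2) + √(s + 2)) / √2 := by
  have hsq : ((√(s - 2) + √(s + 2)) / √2) ^ 2 = √(s ^ 2 - 4) + s := by
    rw [div_pow, sq_sqrt zero_le_two, add_sq, sq_sqrt (by linarith), sq_sqrt (by linarith),
      mul_assoc, ← sqrt_mul (by linarith)]
    ring_nf
  rw [← hsq, sqrt_sq (by positivity)]

lemma rpow_three_fourths_sq {s : ℝ} (hs : 0 ≤ s) : (s ^ 2) ^ ((3 : ℝ) / 4) = √s ^ 3 := by
  rw [← sq_sqrt hs, ← pow_mul, ← rpow_natCast, ← rpow_mul (sqrt_nonneg _), sqrt_sq (sqrt_nonneg _)]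
  norm_num

theorem integral_closed_form_pos (z : ℝ) (hz : 4 < z) :
    (1 / (Real.sqrt 2 * π)) * ∫ q in (-π)..π, 1 / (𝔢 q - z) =
      -(Real.sqrt (Real.sqrt (z - 4) + Real.sqrt z) /
        (z ^ ((3 : ℝ) / 4) * Real.sqrt (z - 4))) := by
  obtain ⟨s, hs, rfl⟩ : ∃ s, 2 < s ∧ z = s ^ 2 :=
    ⟨√z, (lt_sqrt zero_le_two).mpr (by linarith), (sq_sqrt (by linarith)).symm⟩
  rw [integral_one_div_𝔢_sub_sq hs, sqrt_sq (by linarith), sqrt_sqrt_sq_sub_four_add hs.le,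
    rpow_three_fourths_sq (by linarith), show s ^ 2 - 2 * s = s * (s - 2) by ring,
    show s ^ 2 + 2 * s = s * (s + 2) by ring, show s ^ 2 - 4 = (s - 2) * (s + 2) by ring,
    sqrt_mul (by linarith), sqrt_mul (by linarith), sqrt_mul (by linarith)]
  have ha : 0 < √(s - 2) := sqrt_pos.mpr (by linarith)
  have hc : 0 < √(s + 2) := sqrt_pos.mpr (by linarith)
  have hu : 0 < √s := sqrt_pos.mpr (by linarith)
  field_simp
  rw [sq_sqrt (by linarith)]
  ring
end

section
/- Substituting z = -α⁴ with α > 0, the fourth-order polynomial P(ξ) = (ξ - 1)⁴ + 4α⁴ ξ² has exactly two roots inside the open unit disk, namely ξ₀ = (1 - α/A) + i(Aα - α²) and its complex conjugate, where A = √((√(4 + α⁴) + α²)/2). -/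
/-!
Since `4α⁴ξ² = -(2iα²ξ)²`, the quartic is a difference of squares and factors as
`(ξ² - (2 - 2iα²)ξ + 1)(ξ² - (2 + 2iα²)ξ + 1)`, the second factor being the conjugate of the first.
The roots of each factor multiply to `1`, so each factor has at most one root in the open unit
disk. A direct computation, using only that `A > 0` is a root of `A⁴ = α²A² + 1`, shows that `ξ₀`
is a root of the first factor with `‖ξ₀‖ < 1`.
-/

open Real Complex ComplexConjugate

theorem sqrt_quartic_root_pos (α : ℝ) : 0 < √((√(4 + α ^ 4) + α ^ 2) / 2) := by
  have h : 2 ≤ √(4 + α ^ 4) := Real.le_sqrt_of_sq_le (by nlinarith [pow_two_nonneg (α ^ 2)])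
  exact Real.sqrt_pos.2 (by positivity)

theorem sqrt_quartic_root_pow_four (α : ℝ) :
    √((√(4 + α ^ 4) + α ^ 2) / 2) ^ 4 = α ^ 2 * √((√(4 + α ^ 4) + α ^ 2) / 2) ^ 2 + 1 := by
  have hs : √(4 + α ^ 4) ^ 2 = 4 + α ^ 4 := Real.sq_sqrt (by positivity)
  have hA2 : √((√(4 + α ^ 4) + α ^ 2) / 2) ^ 2 = (√(4 + α ^ 4) + α ^ 2) / 2 :=
    Real.sq_sqrt (by positivity)
  rw [show (4 : ℕ) = 2 * 2 from rfl, pow_mul, hA2]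
  linear_combination hs / 4

theorem quartic_eq_mul_conj_quadratics (a ξ : ℂ) :
    (ξ - 1) ^ 4 + 4 * a ^ 4 * ξ ^ 2 =
      (ξ ^ 2 - (2 - 2 * a ^ 2 * I) * ξ + 1) * (ξ ^ 2 - (2 + 2 * a ^ 2 * I) * ξ + 1) := by
  linear_combination (4 * a ^ 4 * ξ ^ 2) * I_sq

theorem mul_eq_one_of_reciprocal_quadratic_roots {R : Type*} [CommRing R] [IsDomain R]
    {s z w : R} (hz : z ^ 2 - s * z + 1 = 0) (hw : w ^ 2 - s * w + 1 = 0) (hne : w ≠ z) :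
    z * w = 1 := by
  have hsum : w = s - z := by
    have : (w - z) * (w + z - s) = 0 := by linear_combination hw - hz
    exact eq_sub_of_add_eq (sub_eq_zero.1 ((mul_eq_zero.1 this).resolve_left (sub_ne_zero.2 hne)))
  rw [hsum]
  linear_combination -hz

theorem one_lt_norm_of_mul_eq_one {R : Type*} [SeminormedRing R] [NormOneClass R] {z w : R}
    (hz : ‖z‖ < 1) (hzw : z * w = 1) : 1 < ‖w‖ := by
  have h : 1 ≤ ‖z‖ * ‖w‖ := by simpa [hzw] using norm_mul_le z w
  nlinarith [norm_nonneg z, norm_nonneg w]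

section ExplicitRoot

variable {α A : ℝ} (hA : 0 < A) (hquart : A ^ 4 = α ^ 2 * A ^ 2 + 1)
include hA hquart

theorem div_eq_of_pow_four_eq : α / A = α * A ^ 3 - α ^ 3 * A := by
  field_simp
  linear_combination -α * hquart

theorem explicit_root_isRoot :
    (((1 - α / A : ℝ) : ℂ) + ((A * α - α ^ 2 : ℝ) : ℂ) * I) ^ 2
      - (2 - 2 * (α : ℂ) ^ 2 * I) * (((1 - α / A : ℝ) : ℂ) + ((A * α - α ^ 2 : ℝ) : ℂ) * I)
      + 1 = 0 := by
  have hquartC : (A : ℂ) ^ 4 = (α : ℂ) ^ 2 * (A : ℂ) ^ 2 + 1 := mod_cast congrArg ofReal hquart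
  rw [div_eq_of_pow_four_eq hA hquart]
  push_cast
  linear_combination (α ^ 2 * (A ^ 2 - α ^ 2) : ℂ) * I_sq
    + (α ^ 2 * (A ^ 2 - α ^ 2 - 2 * I) : ℂ) * hquartC

theorem norm_explicit_root_lt_one (hα : 0 < α) :
    ‖((1 - α / A : ℝ) : ℂ) + ((A * α - α ^ 2 : ℝ) : ℂ) * I‖ < 1 := by
  have hαA : α < A := lt_of_pow_lt_pow_left₀ 2 hA.le (by nlinarith)
  refine (sq_lt_one_iff₀ (norm_nonneg _)).1 ?_
  calc ‖((1 - α / A : ℝ) : ℂ) + ((A * α - α ^ 2 : ℝ) : ℂ) * I‖ ^ 2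
      = A ^ 2 * (A - α) * (A - α) := by
        rw [Complex.sq_norm, normSq_add_mul_I, div_eq_of_pow_four_eq hA hquart]
        linear_combination (α ^ 2 * (A ^ 2 - α ^ 2) - 1) * hquart
    _ < A ^ 2 * (A - α) * (A + α) := by gcongr; nlinarith
    _ = 1 := by linear_combination hquart

end ExplicitRoot

theorem roots_in_unit_disk (α : ℝ) (hα : 0 < α)
    (A : ℝ) (hA : A = Real.sqrt ((Real.sqrt (4 + α ^ 4) + α ^ 2) / 2))
    (ξ₀ : ℂ) (hξ₀ : ξ₀ = ((1 - α / A : ℝ) : ℂ) + ((A * α - α ^ 2 : ℝ) : ℂ) * Complex.I)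
    (P : ℂ → ℂ) (hP : P = fun ξ => (ξ - 1) ^ 4 + 4 * (α : ℂ) ^ 4 * ξ ^ 2) :
    P ξ₀ = 0 ∧ P (starRingEnd ℂ ξ₀) = 0 ∧ ‖ξ₀‖ < 1 ∧
    ∀ ξ : ℂ, P ξ = 0 → ξ ≠ ξ₀ → ξ ≠ starRingEnd ℂ ξ₀ → 1 < ‖ξ‖ := by
  have hApos : 0 < A := hA ▸ sqrt_quartic_root_pos α
  have hquart : A ^ 4 = α ^ 2 * A ^ 2 + 1 := hA ▸ sqrt_quartic_root_pow_four α
  have hroot : ξ₀ ^ 2 - (2 - 2 * (α : ℂ) ^ 2 * I) * ξ₀ + 1 = 0 :=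
    hξ₀ ▸ explicit_root_isRoot hApos hquart
  have hroot' : conj ξ₀ ^ 2 - (2 + 2 * (α : ℂ) ^ 2 * I) * conj ξ₀ + 1 = 0 := by
    simpa [map_ofNat] using congrArg conj hroot
  have hnorm : ‖ξ₀‖ < 1 := hξ₀ ▸ norm_explicit_root_lt_one hApos hquart hα
  have hfactor : ∀ ξ, P ξ = (ξ ^ 2 - (2 - 2 * (α : ℂ) ^ 2 * I) * ξ + 1) *
      (ξ ^ 2 - (2 + 2 * (α : ℂ) ^ 2 * I) * ξ + 1) :=
    hP ▸ quartic_eq_mul_conj_quadratics α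
  refine ⟨by rw [hfactor, hroot, zero_mul], by rw [hfactor, hroot', mul_zero], hnorm, ?_⟩
  intro ξ hξ hne hne'
  rcases mul_eq_zero.1 (hfactor ξ ▸ hξ) with h | h
  · exact one_lt_norm_of_mul_eq_one hnorm (mul_eq_one_of_reciprocal_quadratic_roots hroot h hne)
  · exact one_lt_norm_of_mul_eq_one (by rwa [Complex.norm_conj])
      (mul_eq_one_of_reciprocal_quadratic_roots hroot' h hne')
end

section
/- For every μ > 0 there exists a unique e(μ) < 0 such that (μ/(2π)) ∫_T dq/(𝔢(q) - e(μ)) = 1, and for every μ < 0 there exists a unique e(μ) > 4 with the same property; moreover Δ(μ; z) ≠ 0 for all other z ∈ ℝ \ [0,4]. -/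
open Real

/-- `∫_T dq/(𝔢(q) - z)`. -/
noncomputable def I (z : ℝ) : ℝ := ∫ q in (-π)..π, 1 / (𝔢 q - z)

/-- `Δ(μ; z) = 1 - (μ/(2π)) ∫_T dq/(𝔢(q) - z)`. -/
noncomputable def Δ (μ z : ℝ) : ℝ := 1 - μ / (2 * π) * I z

/-! For continuous `f ≥ 0`, the function `w ↦ ∫ 1 / (f q - w)` is continuous and strictly
increasing on `w < 0` and tends to `0` as `w → -∞`. If moreover `f ≤ c (q - q₀)²`, the piece of
length `δ` next to `q₀` alone contributes at least `δ / (cδ² - w)`, which makes the integral blow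
up as `w → 0⁻`; so `κ ∫ 1 / (f q - w) = 1` has exactly one root `w < 0` for every `κ > 0`.
For `μ > 0` apply this to `f = 𝔢`, which vanishes at `0`. For `μ < 0` use the reflection
`1 / (𝔢 q - z) = -1 / ((4 - 𝔢 q) - (4 - z))`, which trades `z > 4` for `4 - z < 0` and `𝔢` for
`4 - 𝔢`, vanishing quadratically at `-π`. On the other side of `[0, 4]` the integral has the sign
that forces `Δ ≥ 1`. -/

open MeasureTheory Filter Topology Set

lemma StrictMonoOn.existsUnique_eq_of_eventually {g : ℝ → ℝ} {b y : ℝ}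
    (hmono : StrictMonoOn g (Iio b)) (hcont : ContinuousOn g (Iio b))
    (hbot : ∀ᶠ x in atBot, g x < y) (htop : ∀ᶠ x in 𝓝[<] b, y < g x) :
    ∃! x, x < b ∧ g x = y := by
  obtain ⟨x₁, hx₁, hx₁b⟩ := (hbot.and (eventually_lt_atBot b)).exists
  obtain ⟨x₂, hx₂, hx₂b⟩ := (htop.and self_mem_nhdsWithin).exists
  have hsub : uIcc x₁ x₂ ⊆ Iio b := fun x hx => hx.2.trans_lt (max_lt hx₁b hx₂b)
  obtain ⟨x, hx, hgx⟩ := intermediate_value_uIcc (hcont.mono hsub) (mem_uIcc_of_le hx₁.le hx₂.le)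
  exact ⟨x, ⟨hsub hx, hgx⟩, fun x' ⟨hx'b, hgx'⟩ =>
    hmono.injOn hx'b (hsub hx) (hgx'.trans hgx.symm)⟩

noncomputable def resolventIntegral (f : ℝ → ℝ) (a b w : ℝ) : ℝ := ∫ q in a..b, 1 / (f q - w)

section ResolventIntegral

variable {f : ℝ → ℝ} {a b w : ℝ}

lemma sub_pos_of_nonneg_of_neg (hf₀ : ∀ q, 0 ≤ f q) (hw : w < 0) (q : ℝ) : 0 < f q - w := by
  linarith [hf₀ q]

lemma continuous_one_div_sub (hf : Continuous f) (hf₀ : ∀ q, 0 ≤ f q) (hw : w < 0) :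
    Continuous fun q => 1 / (f q - w) :=
  continuous_const.div (hf.sub continuous_const) fun q => (sub_pos_of_nonneg_of_neg hf₀ hw q).ne'

lemma resolventIntegral_nonneg (hab : a ≤ b) (hf₀ : ∀ q, 0 ≤ f q) (hw : w < 0) :
    0 ≤ resolventIntegral f a b w :=
  intervalIntegral.integral_nonneg hab fun q _ =>
    (one_div_pos.2 (sub_pos_of_nonneg_of_neg hf₀ hw q)).le

lemma resolventIntegral_le_div_neg (hf : Continuous f) (hab : a ≤ b) (hf₀ : ∀ q, 0 ≤ f q)
    (hw : w < 0) : resolventIntegral f a b w ≤ (b - a) / -w := by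
  calc resolventIntegral f a b w ≤ ∫ _ in a..b, 1 / -w :=
        intervalIntegral.integral_mono_on hab
          ((continuous_one_div_sub hf hf₀ hw).intervalIntegrable _ _) intervalIntegrable_const
          fun q _ => one_div_le_one_div_of_le (neg_pos.2 hw) (by linarith [hf₀ q])
    _ = (b - a) / -w := by rw [intervalIntegral.integral_const, smul_eq_mul, mul_one_div]

lemma tendsto_resolventIntegral_atBot (hf : Continuous f) (hab : a ≤ b) (hf₀ : ∀ q, 0 ≤ f q) :
    Tendsto (resolventIntegral f a b) atBot (𝓝 0) := by
  have hbound : Tendsto (fun w : ℝ => (b - a) / -w) atBot (𝓝 0) :=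
    tendsto_neg_atBot_atTop.const_div_atTop _
  refine tendsto_of_tendsto_of_tendsto_of_le_of_le' tendsto_const_nhds hbound ?_ ?_ <;>
    filter_upwards [eventually_lt_atBot 0] with w hw
  exacts [resolventIntegral_nonneg hab hf₀ hw, resolventIntegral_le_div_neg hf hab hf₀ hw]

lemma strictMonoOn_resolventIntegral (hf : Continuous f) (hab : a < b) (hf₀ : ∀ q, 0 ≤ f q) :
    StrictMonoOn (resolventIntegral f a b) (Iio 0) := by
  intro w₁ hw₁ w₂ hw₂ hlt
  have hpt : ∀ q, 1 / (f q - w₁) < 1 / (f q - w₂) := fun q =>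
    one_div_lt_one_div_of_lt (sub_pos_of_nonneg_of_neg hf₀ hw₂ q) (by linarith)
  exact intervalIntegral.integral_lt_integral_of_continuousOn_of_le_of_exists_lt hab
    (continuous_one_div_sub hf hf₀ hw₁).continuousOn
    (continuous_one_div_sub hf hf₀ hw₂).continuousOn
    (fun q _ => (hpt q).le) ⟨a, left_mem_Icc.2 hab.le, hpt a⟩

lemma continuousOn_resolventIntegral (hf : Continuous f) (hf₀ : ∀ q, 0 ≤ f q) :
    ContinuousOn (resolventIntegral f a b) (Iio 0) := by
  rw [continuousOn_iff_continuous_domRestrict]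
  refine intervalIntegral.continuous_parametric_intervalIntegral_of_continuous'
    (f := fun (w : Iio (0 : ℝ)) q => 1 / (f q - w)) ?_ a b
  exact continuous_const.div
    ((hf.comp continuous_snd).sub (continuous_subtype_val.comp continuous_fst))
    fun p => (sub_pos_of_nonneg_of_neg hf₀ p.1.2 p.2).ne'

variable {c q₀ : ℝ}

lemma nonneg_of_le_mul_sub_sq (hf₀ : ∀ q, 0 ≤ f q) (hfc : ∀ q, f q ≤ c * (q - q₀) ^ 2) :
    0 ≤ c := by
  simpa using (hf₀ _).trans (hfc (q₀ + 1))

lemma div_le_resolventIntegral (hf : Continuous f) (hf₀ : ∀ q, 0 ≤ f q)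
    (hfc : ∀ q, f q ≤ c * (q - q₀) ^ 2) {δ : ℝ} (haq₀ : a ≤ q₀) (hδ : 0 < δ) (hδb : q₀ + δ ≤ b)
    (hw : w < 0) : δ / (c * δ ^ 2 - w) ≤ resolventIntegral f a b w := by
  have hc := nonneg_of_le_mul_sub_sq hf₀ hfc
  have hint := (continuous_one_div_sub hf hf₀ hw).intervalIntegrable (μ := volume)
  calc δ / (c * δ ^ 2 - w) = ∫ _ in q₀..q₀ + δ, 1 / (c * δ ^ 2 - w) := by
        rw [intervalIntegral.integral_const, smul_eq_mul, mul_one_div, add_sub_cancel_left]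
    _ ≤ ∫ q in q₀..q₀ + δ, 1 / (f q - w) := by
        refine intervalIntegral.integral_mono_on (by linarith) intervalIntegrable_const (hint _ _)
          fun q hq => one_div_le_one_div_of_le (sub_pos_of_nonneg_of_neg hf₀ hw q) ?_
        have hsq : (q - q₀) ^ 2 ≤ δ ^ 2 :=
          pow_le_pow_left₀ (by linarith [hq.1]) (by linarith [hq.2]) 2
        linarith [hfc q, mul_le_mul_of_nonneg_left hsq hc]
    _ ≤ resolventIntegral f a b w :=
        intervalIntegral.integral_mono_interval haq₀ (by linarith) hδb
          (ae_of_all _ fun q => (one_div_pos.2 (sub_pos_of_nonneg_of_neg hf₀ hw q)).le) (hint _ _)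

lemma tendsto_resolventIntegral_nhdsLT_zero (hf : Continuous f) (hf₀ : ∀ q, 0 ≤ f q)
    (hfc : ∀ q, f q ≤ c * (q - q₀) ^ 2) (hq₀ : q₀ ∈ Ico a b) :
    Tendsto (resolventIntegral f a b) (𝓝[<] 0) atTop := by
  refine tendsto_atTop.2 fun M => ?_
  set M' := max M 1
  have hM' : 0 < M' := lt_max_of_lt_right one_pos
  -- With `cδ² < δ / (2M')` and `-w < δ / (2M')`, the bound `δ / (cδ² - w)` exceeds `M'`.
  have hsmall : Tendsto (fun δ => 2 * M' * (c * δ)) (𝓝[>] 0) (𝓝 0) :=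
    ((continuous_const.mul (continuous_const.mul continuous_id)).tendsto' 0 0
      (by simp)).mono_left nhdsWithin_le_nhds
  obtain ⟨δ, hcδ, hδ, hδb⟩ : ∃ δ, 2 * M' * (c * δ) < 1 ∧ δ ∈ Ioo 0 (b - q₀) :=
    ((hsmall.eventually (gt_mem_nhds one_pos)).and (Ioo_mem_nhdsGT (sub_pos.2 hq₀.2))).exists
  have hc := nonneg_of_le_mul_sub_sq hf₀ hfc
  filter_upwards [Ioo_mem_nhdsLT (neg_neg_of_pos (by positivity : 0 < δ / (2 * M')))]
    with w ⟨hw₁, hw₀⟩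
  refine (le_max_left M 1).trans
    (le_trans ?_ (div_le_resolventIntegral hf hf₀ hfc hq₀.1 hδ (by linarith) hw₀))
  rw [le_div_iff₀ (by nlinarith [mul_nonneg hc (sq_nonneg δ)]), mul_sub]
  rw [neg_lt, lt_div_iff₀ (by positivity)] at hw₁
  nlinarith

lemma existsUnique_mul_resolventIntegral_eq_one (hf : Continuous f) (hf₀ : ∀ q, 0 ≤ f q)
    (hfc : ∀ q, f q ≤ c * (q - q₀) ^ 2) (hq₀ : q₀ ∈ Ico a b) {κ : ℝ} (hκ : 0 < κ) :
    ∃! w, w < 0 ∧ κ * resolventIntegral f a b w = 1 := by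
  have hab : a < b := hq₀.1.trans_lt hq₀.2
  refine StrictMonoOn.existsUnique_eq_of_eventually
    (fun w₁ hw₁ w₂ hw₂ hlt =>
      mul_lt_mul_of_pos_left (strictMonoOn_resolventIntegral hf hab hf₀ hw₁ hw₂ hlt) hκ)
    (continuousOn_const.mul (continuousOn_resolventIntegral hf hf₀)) ?_ ?_
  · have := (tendsto_resolventIntegral_atBot hf hab.le hf₀).const_mul κ
    rw [mul_zero] at this
    exact this.eventually (gt_mem_nhds one_pos)
  · exact ((tendsto_resolventIntegral_nhdsLT_zero hf hf₀ hfc hq₀).const_mul_atTop hκ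
      ).eventually_gt_atTop 1

end ResolventIntegral

lemma 𝔢_nonneg (q : ℝ) : 0 ≤ 𝔢 q := sq_nonneg _

lemma 𝔢_le_four (q : ℝ) : 𝔢 q ≤ 4 := by
  unfold 𝔢; nlinarith [neg_one_le_cos q, cos_le_one q]

lemma continuous_𝔢 : Continuous 𝔢 := by
  unfold 𝔢; fun_prop

lemma 𝔢_le_sq (q : ℝ) : 𝔢 q ≤ q ^ 2 := by
  unfold 𝔢; nlinarith [one_sub_sq_div_two_le_cos (x := q), cos_le_one q, neg_one_le_cos q]

lemma four_sub_𝔢_le_sq (q : ℝ) : 4 - 𝔢 q ≤ 2 * (q - -π) ^ 2 := by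
  have h := one_sub_sq_div_two_le_cos (x := q - -π)
  rw [sub_neg_eq_add, cos_add_pi] at h
  unfold 𝔢; nlinarith [cos_le_one q, neg_one_le_cos q]

lemma I_eq_neg_resolventIntegral (z : ℝ) :
    I z = -resolventIntegral (fun q => 4 - 𝔢 q) (-π) π (4 - z) := by
  rw [I, resolventIntegral, ← intervalIntegral.integral_neg]
  congr 1 with q
  rw [sub_sub_sub_cancel_left, ← neg_sub, div_neg]

theorem exists_unique_eigenvalue (μ : ℝ) :
    (0 < μ → (∃! e : ℝ, e < 0 ∧ μ / (2 * π) * I e = 1) ∧ ∀ z > (4 : ℝ), Δ μ z ≠ 0) ∧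
    (μ < 0 → (∃! e : ℝ, 4 < e ∧ μ / (2 * π) * I e = 1) ∧ ∀ z < (0 : ℝ), Δ μ z ≠ 0) := by
  have hπ : 0 < 2 * π := by positivity
  have h4𝔢₀ (q : ℝ) : 0 ≤ 4 - 𝔢 q := sub_nonneg.2 (𝔢_le_four q)
  refine ⟨fun hμ => ⟨?_, fun z hz hΔ => ?_⟩, fun hμ => ⟨?_, fun z hz hΔ => ?_⟩⟩
  · exact existsUnique_mul_resolventIntegral_eq_one (c := 1) (q₀ := 0) continuous_𝔢 𝔢_nonneg
      (fun q => by simpa using 𝔢_le_sq q) ⟨by linarith, pi_pos⟩ (div_pos hμ hπ)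
  · have hI := resolventIntegral_nonneg (a := -π) (b := π) (by linarith) h4𝔢₀
      (show 4 - z < 0 by linarith)
    rw [Δ, I_eq_neg_resolventIntegral] at hΔ
    linarith [mul_nonneg (div_pos hμ hπ).le hI]
  · have hroot := existsUnique_mul_resolventIntegral_eq_one (f := fun q => 4 - 𝔢 q) (a := -π)
      (b := π) (continuous_const.sub continuous_𝔢) h4𝔢₀ four_sub_𝔢_le_sq ⟨le_rfl, by linarith⟩
      (div_pos (neg_pos.2 hμ) hπ)
    refine ((Equiv.subLeft 4).existsUnique_congr fun e => ?_).2 hroot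
    rw [Equiv.subLeft_apply, sub_neg, I_eq_neg_resolventIntegral, neg_div, neg_mul_comm]
  · have hI : 0 ≤ I z := resolventIntegral_nonneg (by linarith) 𝔢_nonneg hz
    rw [Δ] at hΔ
    linarith [mul_nonpos_of_nonpos_of_nonneg (div_neg_of_neg_of_pos hμ hπ).le hI]
end
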